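/- arXiv:1603.04818 — 2 statements merged into one kernel-verified Lean document; each statement's English description precedes it below -/
import Mathlib

section
/- Let f : ℝⁿ → ℝ be Lipschitz. Define the set of irregular points of f as the set of x for which there exists v ∈ ℝⁿ with f'(x,v) existing but (f(x+tu+tv) − f(x+tu))/t failing to converge to f'(x,v) as t → 0 uniformly over u in the closed unit ball. Then the set of irregular points of f is σ-porous (a countable union of porous sets). -/
open Filter Topology Metric Set

/-- Two-sided directional derivative of `f` at `x` in direction `v`. -/
def HasDirDeriv {n : ℕ} (f : EuclideanSpace ℝ (Fin n) → ℝ)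
    (x v : EuclideanSpace ℝ (Fin n)) (L : ℝ) : Prop :=
  Tendsto (fun t : ℝ => (f (x + t • v) - f x) / t) (𝓝[≠] (0 : ℝ)) (𝓝 L)

/-- `(f(x+tu+tv) − f(x+tu))/t → L` as `t → 0`, uniformly over `u` in the closed
unit ball. -/
def UniformDirConv {n : ℕ} (f : EuclideanSpace ℝ (Fin n) → ℝ)
    (x v : EuclideanSpace ℝ (Fin n)) (L : ℝ) : Prop :=
  ∀ ε : ℝ, 0 < ε → ∃ δ : ℝ, 0 < δ ∧ ∀ t : ℝ, t ≠ 0 → |t| < δ →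
    ∀ u : EuclideanSpace ℝ (Fin n), ‖u‖ ≤ 1 →
      |(f (x + t • u + t • v) - f (x + t • u)) / t - L| ≤ ε

/-- A set `E` is porous: for some `lam > 0`, every point of `E` has arbitrarily
close points `x ≠ a` with `B(x, lam * |a - x|)` disjoint from `E`. -/
def IsPorousSet {n : ℕ} (E : Set (EuclideanSpace ℝ (Fin n))) : Prop :=
  ∃ lam : ℝ, 0 < lam ∧ ∀ a ∈ E, ∀ ε : ℝ, 0 < ε → ∃ x : EuclideanSpace ℝ (Fin n),
    x ≠ a ∧ dist x a < ε ∧ Metric.ball x (lam * dist a x) ∩ E = ∅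

namespace Stmt10Aux

/-- divide a bound by `t` -/
lemma div_bound {a b t c : ℝ} (ht : t ≠ 0) (h : |a - b| ≤ c * |t|) : |a / t - b / t| ≤ c := by
  rw [div_sub_div_same, abs_div, div_le_iff₀ (abs_pos.mpr ht)]
  exact h

variable {n : ℕ}

/-- Bad set: difference quotients at `x` in direction `w` are near `r` on `(-δ,δ)`,
but translated quotients are far from `r` at arbitrarily small scales. -/
def Ebad (f : EuclideanSpace ℝ (Fin n) → ℝ) (w : EuclideanSpace ℝ (Fin n)) (q δ r : ℝ) :
    Set (EuclideanSpace ℝ (Fin n)) :=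
  {x | 0 < q ∧ 0 < δ ∧
    (∀ t : ℝ, t ≠ 0 → |t| < δ → |(f (x + t • w) - f x) / t - r| ≤ q / 4) ∧
    (∀ δ' : ℝ, 0 < δ' → ∃ t : ℝ, t ≠ 0 ∧ |t| < δ' ∧ ∃ u, ‖u‖ ≤ 1 ∧
      3 * q / 4 < |(f (x + t • u + t • w) - f (x + t • u)) / t - r|)}

lemma lipAbs {f : EuclideanSpace ℝ (Fin n) → ℝ} {K : NNReal} (hf : LipschitzWith K f)
    (a b : EuclideanSpace ℝ (Fin n)) : |f a - f b| ≤ (K : ℝ) * ‖a - b‖ := by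
  have := hf.dist_le_mul a b
  rwa [Real.dist_eq, dist_eq_norm] at this

lemma porous_Ebad {f : EuclideanSpace ℝ (Fin n) → ℝ} {K : NNReal} (hf : LipschitzWith K f)
    (w : EuclideanSpace ℝ (Fin n)) (q δ r : ℝ) : IsPorousSet (Ebad f w q δ r) := by
  rcases le_or_gt q 0 with hq | hq
  · exact ⟨1, one_pos, fun a ha => absurd ha.1 (not_lt.2 hq)⟩
  set lam : ℝ := q / (4 * ((K : ℝ) + 1)) with hlam
  have hK0 : (0 : ℝ) ≤ K := K.coe_nonneg
  have hlampos : 0 < lam := by positivity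
  refine ⟨lam, hlampos, fun a ha ε hε => ?_⟩
  obtain ⟨hq', hδ, hgood, hbad⟩ := ha
  obtain ⟨t, ht0, htlt, u, hu1, hbig⟩ := hbad (min δ ε) (lt_min hδ hε)
  have htδ : |t| < δ := lt_of_lt_of_le htlt (min_le_left _ _)
  have htε : |t| < ε := lt_of_lt_of_le htlt (min_le_right _ _)
  have htpos : 0 < |t| := abs_pos.mpr ht0
  have hu0 : u ≠ 0 := by
    rintro rfl
    simp only [smul_zero, add_zero] at hbig
    have := hgood t ht0 htδ
    linarith [hbig]
  have hupos : 0 < ‖u‖ := norm_pos_iff.mpr hu0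
  refine ⟨a + t • u, ?_, ?_, ?_⟩
  · intro h
    apply hu0
    have : t • u = 0 := by
      have := congrArg (fun z => z - a) h
      simpa [add_sub_cancel_left] using this
    exact (smul_eq_zero.mp this).resolve_left ht0
  · rw [dist_eq_norm]
    have : ‖a + t • u - a‖ = |t| * ‖u‖ := by
      rw [add_sub_cancel_left, norm_smul, Real.norm_eq_abs]
    rw [this]
    calc |t| * ‖u‖ ≤ |t| * 1 := by
          exact mul_le_mul_of_nonneg_left hu1 (le_of_lt htpos)
      _ = |t| := mul_one _
      _ < ε := htε
  · set x' := a + t • u with hx'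
    have hdist : dist a x' = |t| * ‖u‖ := by
      rw [dist_eq_norm]
      have : a - x' = -(t • u) := by simp [hx']
      rw [this, norm_neg, norm_smul, Real.norm_eq_abs]
    ext y
    simp only [mem_inter_iff, mem_ball, mem_empty_iff_false, iff_false, not_and]
    intro hyball hyE
    obtain ⟨_, _, hygood, _⟩ := hyE
    -- distance bound
    have hyx : ‖x' - y‖ ≤ lam * |t| := by
      have h1 : dist y x' < lam * (|t| * ‖u‖) := by rwa [hdist] at hyball
      have h2 : lam * (|t| * ‖u‖) ≤ lam * |t| := by
        rw [mul_comm |t| ‖u‖, ← mul_assoc]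
        calc lam * ‖u‖ * |t| ≤ lam * 1 * |t| := by
              apply mul_le_mul_of_nonneg_right _ (le_of_lt htpos)
              exact mul_le_mul_of_nonneg_left hu1 (le_of_lt hlampos)
          _ = lam * |t| := by ring
      rw [dist_eq_norm] at h1
      calc ‖x' - y‖ = ‖y - x'‖ := (norm_sub_rev _ _)
        _ ≤ lam * |t| := le_of_lt (lt_of_lt_of_le h1 h2)
    -- A = quotient at x', B = quotient at y (direction w, at time t)
    have hA : 3 * q / 4 < |(f (x' + t • w) - f x') / t - r| := by
      have : a + t • u + t • w = x' + t • w := by rw [hx']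
      rwa [this] at hbig
    have hB : |(f (y + t • w) - f y) / t - r| ≤ q / 4 := hygood t ht0 htδ
    have hAB : |(f (x' + t • w) - f x') / t - (f (y + t • w) - f y) / t| ≤ q / 2 := by
      have hnum : |(f (x' + t • w) - f x') - (f (y + t • w) - f y)| ≤
          (2 * (K : ℝ) * lam) * |t| := by
        have e1 : |f (x' + t • w) - f (y + t • w)| ≤ (K : ℝ) * ‖x' - y‖ := by
          have := lipAbs hf (x' + t • w) (y + t • w)
          simpa [add_sub_add_comm, sub_self, add_zero] using this
        have e2 : |f x' - f y| ≤ (K : ℝ) * ‖x' - y‖ := lipAbs hf x' y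
        have e3 : (K : ℝ) * ‖x' - y‖ ≤ (K : ℝ) * (lam * |t|) :=
          mul_le_mul_of_nonneg_left hyx hK0
        calc |(f (x' + t • w) - f x') - (f (y + t • w) - f y)|
            = |(f (x' + t • w) - f (y + t • w)) - (f x' - f y)| := by ring_nf
          _ ≤ |f (x' + t • w) - f (y + t • w)| + |f x' - f y| := abs_sub _ _
          _ ≤ (K : ℝ) * (lam * |t|) + (K : ℝ) * (lam * |t|) := by
              linarith [e1, e2, e3, le_trans e1 e3, le_trans e2 e3]
          _ = (2 * (K : ℝ) * lam) * |t| := by ring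
      have := div_bound ht0 hnum
      have hle : 2 * (K : ℝ) * lam ≤ q / 2 := by
        rw [hlam, ← mul_div_assoc,
          div_le_div_iff₀ (by positivity) (by norm_num : (0:ℝ) < 2)]
        nlinarith [hK0, hq]
      linarith
    have := abs_sub_abs_le_abs_sub ((f (x' + t • w) - f x') / t - r)
      ((f (y + t • w) - f y) / t - r)
    have habs : |(f (x' + t • w) - f x') / t - r - ((f (y + t • w) - f y) / t - r)| ≤ q / 2 := by
      have : (f (x' + t • w) - f x') / t - r - ((f (y + t • w) - f y) / t - r)
          = (f (x' + t • w) - f x') / t - (f (y + t • w) - f y) / t := by ring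
      rwa [this]
    have : |(f (x' + t • w) - f x') / t - r| ≤
        |(f (y + t • w) - f y) / t - r| + q / 2 := by
      have h := abs_sub ((f (x' + t • w) - f x') / t - r) ((f (y + t • w) - f y) / t - r)
      calc |(f (x' + t • w) - f x') / t - r|
          = |((f (y + t • w) - f y) / t - r) +
            ((f (x' + t • w) - f x') / t - r - ((f (y + t • w) - f y) / t - r))| := by ring_nf
        _ ≤ |(f (y + t • w) - f y) / t - r| +
            |(f (x' + t • w) - f x') / t - r - ((f (y + t • w) - f y) / t - r)| := abs_add_le _ _
        _ ≤ |(f (y + t • w) - f y) / t - r| + q / 2 := by linarith [habs]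
    linarith


noncomputable def dseq (n : ℕ) : ℕ → EuclideanSpace ℝ (Fin n) :=
  TopologicalSpace.denseSeq _

lemma mem_cover {f : EuclideanSpace ℝ (Fin n) → ℝ} {K : NNReal} (hf : LipschitzWith K f)
    (x v : EuclideanSpace ℝ (Fin n)) (L : ℝ)
    (hder : HasDirDeriv f x v L) (hnu : ¬ UniformDirConv f x v L) :
    ∃ p : ℚ × ℚ × ℚ × ℕ,
      x ∈ Ebad f (dseq n p.2.2.2) (p.1 : ℝ) (p.2.1 : ℝ) (p.2.2.1 : ℝ) := by
  have hK0 : (0 : ℝ) ≤ K := K.coe_nonneg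
  unfold UniformDirConv at hnu
  push_neg at hnu
  obtain ⟨ε, hε, hbad⟩ := hnu
  obtain ⟨q, hq0, hqε⟩ := exists_rat_btwn hε
  obtain ⟨r, hr1, hr2⟩ := exists_rat_btwn (show L - (q : ℝ) / 16 < L by linarith)
  have hdr := TopologicalSpace.denseRange_denseSeq (EuclideanSpace ℝ (Fin n))
  obtain ⟨m, hm⟩ := hdr.exists_dist_lt v
    (show (0 : ℝ) < (q : ℝ) / (16 * ((K : ℝ) + 1)) by positivity)
  rw [HasDirDeriv, Metric.tendsto_nhdsWithin_nhds] at hder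
  obtain ⟨δ₀, hδ₀, hδ0⟩ := hder ((q : ℝ) / 16) (by positivity)
  obtain ⟨δ, hδ1, hδ2⟩ := exists_rat_btwn hδ₀
  set w : EuclideanSpace ℝ (Fin n) := dseq n m with hw
  have hwv : (K : ℝ) * ‖w - v‖ ≤ (q : ℝ) / 16 := by
    have h1 : ‖w - v‖ ≤ (q : ℝ) / (16 * ((K : ℝ) + 1)) := by
      have : dist v w = ‖w - v‖ := by rw [dist_comm, dist_eq_norm]
      rw [← this]; exact le_of_lt hm
    have h2 : (K : ℝ) * ‖w - v‖ ≤ (K : ℝ) * ((q : ℝ) / (16 * ((K : ℝ) + 1))) :=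
      mul_le_mul_of_nonneg_left h1 hK0
    have h3 : (K : ℝ) * ((q : ℝ) / (16 * ((K : ℝ) + 1))) ≤ (q : ℝ) / 16 := by
      rw [← mul_div_assoc, div_le_div_iff₀ (by positivity) (by norm_num : (0:ℝ) < 16)]
      nlinarith
    linarith
  have hLr : |L - (r : ℝ)| < (q : ℝ) / 16 := abs_lt.mpr ⟨by linarith, by linarith⟩
  refine ⟨(q, δ, r, m), hq0, by exact_mod_cast hδ1, ?_, ?_⟩
  · -- good condition
    intro t ht0 htδ
    have htδ₀ : |t| < δ₀ := lt_trans htδ hδ2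
    have hG2 : |(f (x + t • v) - f x) / t - L| < (q : ℝ) / 16 := by
      have := hδ0 (by simpa using ht0 : t ∈ ({0}ᶜ : Set ℝ))
        (by rwa [Real.dist_eq, sub_zero])
      rwa [Real.dist_eq] at this
    have hG1 : |(f (x + t • w) - f x) / t - (f (x + t • v) - f x) / t| ≤
        (K : ℝ) * ‖w - v‖ := by
      apply div_bound ht0
      have h1 : |f (x + t • w) - f x - (f (x + t • v) - f x)|
          = |f (x + t • w) - f (x + t • v)| := by ring_nf
      rw [h1]
      have := lipAbs hf (x + t • w) (x + t • v)
      have h2 : x + t • w - (x + t • v) = t • (w - v) := by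
        rw [smul_sub]; abel
      rw [h2, norm_smul, Real.norm_eq_abs] at this
      calc |f (x + t • w) - f (x + t • v)| ≤ (K : ℝ) * (|t| * ‖w - v‖) := this
        _ = (K : ℝ) * ‖w - v‖ * |t| := by ring
    set A := (f (x + t • w) - f x) / t
    set B := (f (x + t • v) - f x) / t
    have htri : |A - (r : ℝ)| ≤ |A - B| + |B - L| + |L - (r : ℝ)| := by
      calc |A - (r : ℝ)| = |(A - B) + (B - L) + (L - (r : ℝ))| := by ring_nf
        _ ≤ |A - B| + |B - L| + |L - (r : ℝ)| := abs_add_three _ _ _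
    linarith
  · -- bad condition
    intro δ' hδ'
    obtain ⟨t, ht0, htδ', u, hu, hfar⟩ := hbad δ' hδ'
    refine ⟨t, ht0, htδ', u, hu, ?_⟩
    set X := (f (x + t • u + t • w) - f (x + t • u)) / t
    set Y := (f (x + t • u + t • v) - f (x + t • u)) / t
    have hXY : |X - Y| ≤ (K : ℝ) * ‖w - v‖ := by
      apply div_bound ht0
      have h1 : |f (x + t • u + t • w) - f (x + t • u) -
          (f (x + t • u + t • v) - f (x + t • u))|
          = |f (x + t • u + t • w) - f (x + t • u + t • v)| := by ring_nf
      rw [h1]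
      have := lipAbs hf (x + t • u + t • w) (x + t • u + t • v)
      have h2 : x + t • u + t • w - (x + t • u + t • v) = t • (w - v) := by
        rw [smul_sub]; abel
      rw [h2, norm_smul, Real.norm_eq_abs] at this
      calc |f (x + t • u + t • w) - f (x + t • u + t • v)|
          ≤ (K : ℝ) * (|t| * ‖w - v‖) := this
        _ = (K : ℝ) * ‖w - v‖ * |t| := by ring
    have htri : |Y - L| ≤ |X - Y| + |X - (r : ℝ)| + |L - (r : ℝ)| := by
      calc |Y - L| = |(Y - X) + (X - (r : ℝ)) + ((r : ℝ) - L)| := by ring_nf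
        _ ≤ |Y - X| + |X - (r : ℝ)| + |(r : ℝ) - L| := abs_add_three _ _ _
        _ = |X - Y| + |X - (r : ℝ)| + |L - (r : ℝ)| := by
            rw [abs_sub_comm Y X, abs_sub_comm (r : ℝ) L]
    linarith

lemma porous_mono {E F : Set (EuclideanSpace ℝ (Fin n))} (h : IsPorousSet E) (hFE : F ⊆ E) :
    IsPorousSet F := by
  obtain ⟨lam, hl, h⟩ := h
  refine ⟨lam, hl, fun a ha ε hε => ?_⟩
  obtain ⟨x, hx1, hx2, hx3⟩ := h a (hFE ha) ε hε
  refine ⟨x, hx1, hx2, ?_⟩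
  rw [← subset_empty_iff, ← hx3]
  exact inter_subset_inter_right _ hFE

end Stmt10Aux


theorem stmt_10 {n : ℕ} (f : EuclideanSpace ℝ (Fin n) → ℝ) (K : NNReal)
    (hf : LipschitzWith K f) :
    ∃ P : ℕ → Set (EuclideanSpace ℝ (Fin n)),
      (∀ k, IsPorousSet (P k)) ∧
      {x : EuclideanSpace ℝ (Fin n) |
        ∃ (v : EuclideanSpace ℝ (Fin n)) (L : ℝ),
          HasDirDeriv f x v L ∧ ¬ UniformDirConv f x v L} = ⋃ k, P k := by
  classical
  set S := {x : EuclideanSpace ℝ (Fin n) |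
    ∃ (v : EuclideanSpace ℝ (Fin n)) (L : ℝ),
      HasDirDeriv f x v L ∧ ¬ UniformDirConv f x v L} with hS
  obtain ⟨e, he⟩ := exists_surjective_nat (ℚ × ℚ × ℚ × ℕ)
  refine ⟨fun k =>
    Stmt10Aux.Ebad f (Stmt10Aux.dseq n ((e k).2.2.2))
      (((e k).1 : ℝ)) (((e k).2.1 : ℝ)) (((e k).2.2.1 : ℝ)) ∩ S,
    fun k => Stmt10Aux.porous_mono (Stmt10Aux.porous_Ebad hf _ _ _ _) inter_subset_left,
    ?_⟩
  apply subset_antisymm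
  · intro x hx
    obtain ⟨v, L, h1, h2⟩ := hx
    obtain ⟨p, hp⟩ := Stmt10Aux.mem_cover hf x v L h1 h2
    obtain ⟨k, hk⟩ := he p
    refine mem_iUnion.mpr ⟨k, ?_⟩
    rw [hk]
    exact ⟨hp, ⟨v, L, h1, h2⟩⟩
  · exact iUnion_subset fun k => inter_subset_right
end

section
/- Let f : ℝⁿ → ℝ be Lipschitz. Then there exists a σ-porous set A ⊆ ℝⁿ such that for every x ∉ A, directional derivatives of f act linearly at x: if f'(x,u) and f'(x,v) exist for u, v ∈ ℝⁿ, then for all a, b ∈ ℝ, the directional derivative f'(x, au+bv) exists and equals a·f'(x,u) + b·f'(x,v). -/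
open Filter Topology Metric Set

/-- A set is σ-porous if it is a countable union of porous sets. -/
def IsSigmaPorous {n : ℕ} (E : Set (EuclideanSpace ℝ (Fin n))) : Prop :=
  ∃ P : ℕ → Set (EuclideanSpace ℝ (Fin n)), (∀ k, IsPorousSet (P k)) ∧ E = ⋃ k, P k

/-!
Fix a countable dense set of directions. For `u`, `v` in it and rational `c`, `ε`, `δ`, consider
the points `x` at which the difference quotients of `f` along `v` stay below `c + ε / 2` for
`0 < s ≤ δ`, while the quotients along `v` based at `x + t • u` exceed `c + ε` for arbitrarily
small `t > 0`. Because `f` is Lipschitz, no point within distance of order `ε t` of `x + t • u` has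
the first property, so each such set is porous. Outside their union, and the analogous union for
`-f`, the shifted quotients `(f (x + t • u + t • v) - f (x + t • u)) / t` tend to `f'(x, v)`
whenever it exists, first for `u`, `v` in the dense set and then, by Lipschitz approximation, for
all `u`, `v`. Splitting the difference quotient along `u + v` into the quotient along `u` and the
shifted quotient gives additivity; homogeneity holds at every point.
-/

open TopologicalSpace

section DiffQuot

variable {E : Type*} [NormedAddCommGroup E] [NormedSpace ℝ E]

noncomputable def diffQuot (g : E → ℝ) (x v : E) (t : ℝ) : ℝ :=
  (g (x + t • v) - g x) / t

noncomputable def shiftedDiffQuot (g : E → ℝ) (x u v : E) (t : ℝ) : ℝ :=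
  diffQuot g (x + t • u) v t

lemma diffQuot_add (g : E → ℝ) (x u v : E) (t : ℝ) :
    diffQuot g x (u + v) t = diffQuot g x u t + shiftedDiffQuot g x u v t := by
  simp only [shiftedDiffQuot, diffQuot, smul_add, ← add_assoc]
  ring

lemma diffQuot_neg (g : E → ℝ) (x v : E) (t : ℝ) : diffQuot (-g) x v t = -diffQuot g x v t := by
  simp only [diffQuot, Pi.neg_apply]
  ring

lemma shiftedDiffQuot_neg (g : E → ℝ) (x u v : E) (t : ℝ) :
    shiftedDiffQuot (-g) x u v t = -shiftedDiffQuot g x u v t :=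
  diffQuot_neg g _ v t

lemma shiftedDiffQuot_neg_neg (g : E → ℝ) (x u v : E) (t : ℝ) :
    shiftedDiffQuot g x (-u) (-v) (-t) = -shiftedDiffQuot g x u v t := by
  simp only [shiftedDiffQuot, diffQuot, neg_smul_neg, div_neg]

lemma tendsto_diffQuot_smul {g : E → ℝ} {x v : E} {L : ℝ}
    (h : Tendsto (diffQuot g x v) (𝓝[≠] 0) (𝓝 L)) (a : ℝ) :
    Tendsto (diffQuot g x (a • v)) (𝓝[≠] 0) (𝓝 (a * L)) := by
  rcases eq_or_ne a 0 with rfl | ha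
  · simp only [zero_smul, zero_mul]
    exact tendsto_const_nhds.congr fun t => by simp [diffQuot]
  have hmul : Tendsto (fun t : ℝ => t * a) (𝓝[≠] 0) (𝓝[≠] 0) := by
    refine tendsto_nhdsWithin_of_tendsto_nhds_of_eventually_within _ ?_ ?_
    · simpa using ((continuous_mul_const a).tendsto 0).mono_left nhdsWithin_le_nhds
    · filter_upwards [self_mem_nhdsWithin] with t ht using mul_ne_zero ht ha
  refine ((h.comp hmul).const_mul a).congr' ?_
  filter_upwards [self_mem_nhdsWithin] with t (ht : t ≠ 0)
  simp only [Function.comp_apply, diffQuot, smul_smul, mul_comm a]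
  field_simp

lemma LipschitzWith.abs_diffQuot_sub_le {K : NNReal} {g : E → ℝ} (hg : LipschitzWith K g)
    (y z v w : E) {t : ℝ} (ht : 0 < t) :
    |diffQuot g y v t - diffQuot g z w t| ≤ K * (2 * ‖y - z‖ / t + ‖v - w‖) := by
  have h₁ : |g (y + t • v) - g (z + t • w)| ≤ K * (‖y - z‖ + t * ‖v - w‖) := by
    calc |g (y + t • v) - g (z + t • w)| ≤ K * ‖y + t • v - (z + t • w)‖ := by
          simpa [Real.dist_eq, dist_eq_norm] using hg.dist_le_mul (y + t • v) (z + t • w)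
      _ ≤ K * (‖y - z‖ + t * ‖v - w‖) := by
          gcongr
          rw [add_sub_add_comm, ← smul_sub]
          refine (norm_add_le _ _).trans_eq ?_
          rw [norm_smul, Real.norm_of_nonneg ht.le]
  have h₂ : |g y - g z| ≤ K * ‖y - z‖ := by
    simpa [Real.dist_eq, dist_eq_norm] using hg.dist_le_mul y z
  rw [diffQuot, diffQuot, ← sub_div, abs_div, abs_of_pos ht, div_le_iff₀ ht]
  calc |g (y + t • v) - g y - (g (z + t • w) - g z)|
        ≤ |g (y + t • v) - g (z + t • w)| + |g y - g z| := by
          rw [sub_sub_sub_comm]; exact abs_sub _ _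
      _ ≤ K * (‖y - z‖ + t * ‖v - w‖) + K * ‖y - z‖ := add_le_add h₁ h₂
      _ = K * (2 * ‖y - z‖ / t + ‖v - w‖) * t := by field_simp; ring

def jumpSet (g : E → ℝ) (u v : E) (c ε δ : ℝ) : Set E :=
  {x | 0 < ε ∧ 0 < δ ∧ (∀ s ∈ Ioc 0 δ, diffQuot g x v s < c + ε / 2) ∧
    ∀ r > 0, ∃ t ∈ Ioo 0 r, c + ε < shiftedDiffQuot g x u v t}

lemma jumpSet_zero_left (g : E → ℝ) (v : E) (c ε δ : ℝ) : jumpSet g 0 v c ε δ = ∅ := by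
  refine eq_empty_of_forall_notMem fun x ⟨hε, hδ, hquot, hjump⟩ => ?_
  obtain ⟨t, ht, hct⟩ := hjump δ hδ
  have := hquot t ⟨ht.1, ht.2.le⟩
  simp only [shiftedDiffQuot, smul_zero, add_zero] at hct
  linarith

end DiffQuot

section Porosity

variable {n : ℕ}

lemma isPorousSet_empty : IsPorousSet (∅ : Set (EuclideanSpace ℝ (Fin n))) :=
  ⟨1, one_pos, fun _ h => h.elim⟩

lemma isPorousSet_jumpSet {K : NNReal} {g : EuclideanSpace ℝ (Fin n) → ℝ}
    (hg : LipschitzWith K g) (u v : EuclideanSpace ℝ (Fin n)) (c ε δ : ℝ) :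
    IsPorousSet (jumpSet g u v c ε δ) := by
  rcases eq_or_ne u 0 with rfl | hu
  · rw [jumpSet_zero_left]
    exact isPorousSet_empty
  rcases le_or_gt ε 0 with hε | hε
  · have : jumpSet g u v c ε δ = ∅ := eq_empty_of_forall_notMem fun x hx => hε.not_gt hx.1
    exact this ▸ isPorousSet_empty
  have hu' : 0 < ‖u‖ := norm_pos_iff.2 hu
  refine ⟨ε / (4 * (K + 1) * ‖u‖), by positivity, fun a ⟨_, hδ, _, hjump⟩ ρ hρ => ?_⟩
  obtain ⟨t, ⟨ht, htρδ⟩, hct⟩ := hjump (min (ρ / ‖u‖) δ) (by positivity)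
  have hdist : dist a (a + t • u) = t * ‖u‖ := by
    rw [dist_comm, dist_eq_norm, add_sub_cancel_left, norm_smul, Real.norm_of_nonneg ht.le]
  refine ⟨a + t • u, by simp [ht.ne', hu], ?_, ?_⟩
  · rw [dist_comm, hdist, ← lt_div_iff₀ hu']
    exact htρδ.trans_le (min_le_left _ _)
  refine eq_empty_of_forall_notMem fun y ⟨hy, _, _, hquot, _⟩ => ?_
  have hyt := hquot t ⟨ht, htρδ.le.trans (min_le_right _ _)⟩
  rw [mem_ball, hdist, dist_eq_norm] at hy
  have hclose := hg.abs_diffQuot_sub_le y (a + t • u) v v ht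
  rw [sub_self, norm_zero, add_zero] at hclose
  have hsmall : (K + 1) * (2 * ‖y - (a + t • u)‖ / t) < ε / 2 :=
    calc (K + 1) * (2 * ‖y - (a + t • u)‖ / t)
        < (K + 1) * (2 * (ε / (4 * (K + 1) * ‖u‖) * (t * ‖u‖)) / t) := by gcongr
      _ = ε / 2 := by field_simp; ring
  have hK : K * (2 * ‖y - (a + t • u)‖ / t) ≤ (K + 1) * (2 * ‖y - (a + t • u)‖ / t) := by
    gcongr; linarith
  rw [shiftedDiffQuot] at hct
  linarith [(abs_le.1 hclose).1]

end Porosity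

section SigmaPorous

variable {n : ℕ}

lemma isSigmaPorous_iUnion {ι : Type*} [Countable ι] {P : ι → Set (EuclideanSpace ℝ (Fin n))}
    (hP : ∀ i, IsPorousSet (P i)) : IsSigmaPorous (⋃ i, P i) := by
  cases isEmpty_or_nonempty ι
  · exact ⟨fun _ => ∅, fun _ => isPorousSet_empty, by simp⟩
  · obtain ⟨e, he⟩ := exists_surjective_nat ι
    exact ⟨P ∘ e, fun k => hP (e k), (he.iUnion_comp P).symm⟩

lemma IsSigmaPorous.union {A B : Set (EuclideanSpace ℝ (Fin n))} (hA : IsSigmaPorous A)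
    (hB : IsSigmaPorous B) : IsSigmaPorous (A ∪ B) := by
  obtain ⟨P, hP, rfl⟩ := hA
  obtain ⟨Q, hQ, rfl⟩ := hB
  simpa [iUnion_sum] using isSigmaPorous_iUnion (P := Sum.elim P Q) (Sum.forall.2 ⟨hP, hQ⟩)

end SigmaPorous

section JumpLocus

variable {E : Type*} [NormedAddCommGroup E] [NormedSpace ℝ E] [SeparableSpace E]

def jumpLocus (g : E → ℝ) : Set E :=
  ⋃ p : ℕ × ℕ × ℚ × ℚ × ℚ,
    jumpSet g (denseSeq E p.1) (denseSeq E p.2.1) p.2.2.1 p.2.2.2.1 p.2.2.2.2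

lemma isSigmaPorous_jumpLocus {n : ℕ} {K : NNReal} {g : EuclideanSpace ℝ (Fin n) → ℝ}
    (hg : LipschitzWith K g) : IsSigmaPorous (jumpLocus g) :=
  isSigmaPorous_iUnion fun _ => isPorousSet_jumpSet hg _ _ _ _ _

lemma eventually_shiftedDiffQuot_denseSeq_lt {g : E → ℝ} {x : E} (hx : x ∉ jumpLocus g)
    (i j : ℕ) {L : ℝ} (hv : ∀ᶠ s in 𝓝[>] 0, diffQuot g x (denseSeq E j) s < L)
    {ε : ℝ} (hε : 0 < ε) :
    ∀ᶠ t in 𝓝[>] 0, shiftedDiffQuot g x (denseSeq E i) (denseSeq E j) t < L + ε := by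
  obtain ⟨ε₀, hε₀, hε₀ε⟩ := exists_rat_btwn hε
  obtain ⟨c, hLc, hcL⟩ := exists_rat_btwn (show L - ε₀ / 2 < L by linarith)
  obtain ⟨δ', hδ', hδ'v⟩ := mem_nhdsGT_iff_exists_Ioc_subset.1 hv
  obtain ⟨δ, hδ, hδδ'⟩ := exists_rat_btwn (mem_Ioi.1 hδ')
  have hnot : x ∉ jumpSet g (denseSeq E i) (denseSeq E j) c ε₀ δ :=
    fun h => hx (mem_iUnion.2 ⟨(i, j, c, ε₀, δ), h⟩)
  simp only [jumpSet, mem_ofPred_eq, not_and, not_forall, not_exists, not_lt] at hnot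
  obtain ⟨r, hr, hle⟩ := hnot hε₀ hδ fun s hs =>
    (hδ'v ⟨hs.1, hs.2.trans hδδ'.le⟩ : diffQuot g x (denseSeq E j) s < L).trans (by linarith)
  filter_upwards [Ioo_mem_nhdsGT hr] with t ht
  linarith [hle t ht]

lemma LipschitzWith.eventually_shiftedDiffQuot_lt {K : NNReal} {g : E → ℝ}
    (hg : LipschitzWith K g) {x : E} (hx : x ∉ jumpLocus g) (u : E) {v : E} {L : ℝ}
    (hv : Tendsto (diffQuot g x v) (𝓝[≠] 0) (𝓝 L)) {ε : ℝ} (hε : 0 < ε) :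
    ∀ᶠ t in 𝓝[>] 0, shiftedDiffQuot g x u v t < L + ε := by
  set η := ε / (8 * (K + 1)) with hη_def
  have hη : 0 < η := by positivity
  have hKη : K * η ≤ ε / 8 := by
    rw [hη_def, mul_div_assoc', div_le_div_iff₀ (by positivity) (by norm_num)]
    nlinarith
  obtain ⟨i, hi⟩ := (denseRange_denseSeq E).exists_dist_lt u hη
  obtain ⟨j, hj⟩ := (denseRange_denseSeq E).exists_dist_lt v hη
  rw [dist_eq_norm] at hi hj
  have hvj : ∀ᶠ s in 𝓝[>] 0, diffQuot g x (denseSeq E j) s < L + ε / 4 := by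
    filter_upwards [(hv.mono_left (nhdsGT_le_nhdsNE 0)).eventually (gt_mem_nhds
      (show L < L + ε / 8 by linarith)), self_mem_nhdsWithin] with s hs (hs0 : 0 < s)
    have hclose := hg.abs_diffQuot_sub_le x x (denseSeq E j) v hs0
    rw [sub_self, norm_zero, mul_zero, zero_div, zero_add, norm_sub_rev] at hclose
    have hKv : K * ‖v - denseSeq E j‖ ≤ K * η := by gcongr
    linarith [(abs_le.1 hclose).2]
  filter_upwards [eventually_shiftedDiffQuot_denseSeq_lt hx i j hvj (show 0 < ε / 4 by positivity),
    self_mem_nhdsWithin] with t ht (ht0 : 0 < t)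
  have hclose := hg.abs_diffQuot_sub_le (x + t • u) (x + t • denseSeq E i) v (denseSeq E j) ht0
  rw [add_sub_add_left_eq_sub, ← smul_sub, norm_smul, Real.norm_of_nonneg ht0.le,
    mul_left_comm, mul_div_cancel_left₀ _ ht0.ne'] at hclose
  have hKuv : K * (2 * ‖u - denseSeq E i‖ + ‖v - denseSeq E j‖) ≤ K * (3 * η) := by
    gcongr; linarith
  rw [shiftedDiffQuot] at ht ⊢
  linarith [(abs_le.1 hclose).2]

end JumpLocus

section Additivity

variable {E : Type*} [NormedAddCommGroup E] [NormedSpace ℝ E] [SeparableSpace E]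
  {K : NNReal} {g : E → ℝ} {x : E}

lemma LipschitzWith.tendsto_shiftedDiffQuot_nhdsGT (hg : LipschitzWith K g)
    (hx : x ∉ jumpLocus g ∪ jumpLocus (-g)) (u : E) {v : E} {L : ℝ}
    (hv : Tendsto (diffQuot g x v) (𝓝[≠] 0) (𝓝 L)) :
    Tendsto (shiftedDiffQuot g x u v) (𝓝[>] 0) (𝓝 L) := by
  rw [mem_union, not_or] at hx
  have hv_neg : Tendsto (diffQuot (-g) x v) (𝓝[≠] 0) (𝓝 (-L)) :=
    hv.neg.congr fun t => (diffQuot_neg g x v t).symm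
  refine tendsto_order.2 ⟨fun a ha => ?_, fun a ha => ?_⟩
  · filter_upwards [hg.neg.eventually_shiftedDiffQuot_lt hx.2 u hv_neg (sub_pos.2 ha)] with t ht
    rw [shiftedDiffQuot_neg] at ht
    linarith
  · filter_upwards [hg.eventually_shiftedDiffQuot_lt hx.1 u hv (sub_pos.2 ha)] with t ht
    linarith

lemma LipschitzWith.tendsto_shiftedDiffQuot (hg : LipschitzWith K g)
    (hx : x ∉ jumpLocus g ∪ jumpLocus (-g)) (u : E) {v : E} {L : ℝ}
    (hv : Tendsto (diffQuot g x v) (𝓝[≠] 0) (𝓝 L)) :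
    Tendsto (shiftedDiffQuot g x u v) (𝓝[≠] 0) (𝓝 L) := by
  rw [← nhdsLT_sup_nhdsGT]
  refine Tendsto.sup ?_ (hg.tendsto_shiftedDiffQuot_nhdsGT hx u hv)
  have hv_neg : Tendsto (diffQuot g x (-v)) (𝓝[≠] 0) (𝓝 (-L)) := by
    simpa using tendsto_diffQuot_smul hv (-1)
  have := ((hg.tendsto_shiftedDiffQuot_nhdsGT hx (-u) hv_neg).comp
    (by simpa using tendsto_neg_nhdsLT (a := (0 : ℝ)))).neg
  simpa [Function.comp_def, shiftedDiffQuot_neg_neg] using this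

lemma LipschitzWith.tendsto_diffQuot_add (hg : LipschitzWith K g)
    (hx : x ∉ jumpLocus g ∪ jumpLocus (-g)) {u v : E} {Lu Lv : ℝ}
    (hu : Tendsto (diffQuot g x u) (𝓝[≠] 0) (𝓝 Lu))
    (hv : Tendsto (diffQuot g x v) (𝓝[≠] 0) (𝓝 Lv)) :
    Tendsto (diffQuot g x (u + v)) (𝓝[≠] 0) (𝓝 (Lu + Lv)) :=
  (hu.add (hg.tendsto_shiftedDiffQuot hx u hv)).congr fun t => (diffQuot_add g x u v t).symm

end Additivity

theorem stmt_11 {n : ℕ} (f : EuclideanSpace ℝ (Fin n) → ℝ) (K : NNReal)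
    (hf : LipschitzWith K f) :
    ∃ A : Set (EuclideanSpace ℝ (Fin n)), IsSigmaPorous A ∧
      ∀ x ∉ A, ∀ (u v : EuclideanSpace ℝ (Fin n)) (Lu Lv : ℝ),
        HasDirDeriv f x u Lu → HasDirDeriv f x v Lv →
        ∀ a b : ℝ, HasDirDeriv f x (a • u + b • v) (a * Lu + b * Lv) := by
  refine ⟨jumpLocus f ∪ jumpLocus (-f),
    (isSigmaPorous_jumpLocus hf).union (isSigmaPorous_jumpLocus hf.neg), ?_⟩
  intro x hx u v Lu Lv hu hv a b
  -- `HasDirDeriv f x v L` unfolds to `Tendsto (diffQuot f x v) (𝓝[≠] 0) (𝓝 L)`.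
  exact hf.tendsto_diffQuot_add hx (tendsto_diffQuot_smul hu a) (tendsto_diffQuot_smul hv b)
end
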